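/- arXiv:2010.11021 — 4 statements merged into one kernel-verified Lean document; each statement's English description precedes it below -/
import Mathlib

section
/- Fix a real number A with 0 < A < 1, positive integers P, Q, and set c := P/Q. Let z be real with 0 < z < A, and set U := A^{−c}/z (real power of the positive number A). Then (1 − A^{c+1}U)/(1 − A^{c−1}U) = (z−A)/(z−A⁻¹) is positive; define Λ(U) := U·((1 − A^{c+1}U)/(1 − A^{c−1}U))^c using the real power of this positive ratio, X^BEM(U) := Λ(U)^{−Q}, and X^ACEH(z) := z·((1−Az)/(1−A⁻¹z))^c (the base (1−Az)/(1−A⁻¹z) is positive since 0 < z < A < 1). Then X^ACEH(z) = A^c · (X^BEM(U))^{1/Q}, where (X^BEM(U))^{1/Q} is the real power of the positive number X^BEM(U). -/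
open Real

/-! Substituting `U = A^{-c}/z` turns `A^{c±1} U` into `A^{±1}/z`, so the BEM ratio becomes
`r = (z - A)/(z - A⁻¹)`, while the ACEH ratio is `A²/r`. The `-Q`-th and `1/Q`-th powers cancel
to `Λ(U)⁻¹ = z A^c r^{-c}`, and both sides equal `z A^{2c} r^{-c}`. -/

lemma rpow_add_mul_rpow_neg_div {A : ℝ} (hA : 0 < A) (c d z : ℝ) :
    A ^ (c + d) * (A ^ (-c) / z) = A ^ d / z := by
  rw [← mul_div_assoc, ← rpow_add hA, add_neg_cancel_comm]

lemma one_sub_div_div_one_sub_div {K : Type*} [Field K] {z : K} (hz : z ≠ 0) (a b : K) :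
    (1 - a / z) / (1 - b / z) = (z - a) / (z - b) := by
  rw [one_sub_div hz, one_sub_div hz, div_div_div_cancel_right₀ hz]

lemma one_sub_mul_div_one_sub_inv_mul {K : Type*} [Field K] {A : K} (hA : A ≠ 0) (z : K) :
    (1 - A * z) / (1 - A⁻¹ * z) = A * A / ((z - A) / (z - A⁻¹)) := by
  rw [div_div_eq_mul_div]
  by_cases hzA : z = A
  · simp [hzA, hA]
  have hden : 1 - A⁻¹ * z ≠ 0 := by
    rw [← inv_mul_cancel₀ hA, ← mul_sub]
    exact mul_ne_zero (inv_ne_zero hA) (sub_ne_zero.mpr (Ne.symm hzA))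
  rw [div_eq_div_iff hden (sub_ne_zero.mpr hzA)]
  field_simp
  ring

lemma rpow_neg_rpow_inv {x : ℝ} (hx : 0 ≤ x) {y : ℝ} (hy : y ≠ 0) :
    (x ^ (-y)) ^ y⁻¹ = x⁻¹ := by
  rw [← rpow_mul hx, neg_mul, mul_inv_cancel₀ hy, rpow_neg_one]

theorem stmt_2_general (A : ℝ) (hA0 : 0 < A) (hA1 : A < 1) (Q : ℕ) (hQ : 0 < Q)
    (z : ℝ) (hz0 : 0 < z) (hzA : z < A)
    (c U : ℝ) (hU : U = A ^ (-c) / z) :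
    (1 - A ^ (c + 1) * U) / (1 - A ^ (c - 1) * U) = (z - A) / (z - A⁻¹) ∧
    0 < (z - A) / (z - A⁻¹) ∧
    z * ((1 - A * z) / (1 - A⁻¹ * z)) ^ c
      = A ^ c *
        ((U * ((1 - A ^ (c + 1) * U) / (1 - A ^ (c - 1) * U)) ^ c) ^ (-(Q : ℝ)))
          ^ ((Q : ℝ)⁻¹) := by
  have hratio : (1 - A ^ (c + 1) * U) / (1 - A ^ (c - 1) * U) = (z - A) / (z - A⁻¹) := by
    rw [hU, sub_eq_add_neg c, rpow_add_mul_rpow_neg_div hA0, rpow_add_mul_rpow_neg_div hA0,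
      rpow_one, rpow_neg_one, one_sub_div_div_one_sub_div hz0.ne']
  have hzAinv : z < A⁻¹ := hzA.trans (hA1.trans ((one_lt_inv₀ hA0).mpr hA1))
  have hr : 0 < (z - A) / (z - A⁻¹) := div_pos_of_neg_of_neg (by linarith) (by linarith)
  refine ⟨hratio, hr, ?_⟩
  have hUinv : U⁻¹ = z * A ^ c := by
    rw [hU, inv_div, rpow_neg hA0.le, div_inv_eq_mul]
  have hU0 : 0 < U := by rw [hU]; positivity
  rw [hratio, rpow_neg_rpow_inv (by positivity) (Nat.cast_ne_zero.mpr hQ.ne'),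
    one_sub_mul_div_one_sub_inv_mul hA0.ne', div_rpow (by positivity) hr.le,
    mul_rpow hA0.le hA0.le, mul_inv, hUinv]
  ring

/-- Comparison of the Brini–Eynard–Mariño and ACEH spectral curve functions (first identity):
with `c = P/Q`, `U = A^{-c}/z` for `0 < z < A < 1`, the ratio
`(1 - A^{c+1}U)/(1 - A^{c-1}U)` equals `(z - A)/(z - A⁻¹)` and is positive, and
`X^ACEH(z) = A^c · (X^BEM(U))^{1/Q}` where `Λ(U) = U·((1-A^{c+1}U)/(1-A^{c-1}U))^c`,
`X^BEM(U) = Λ(U)^{-Q}`, `X^ACEH(z) = z·((1-Az)/(1-A⁻¹z))^c`. -/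
theorem stmt_2 (A : ℝ) (hA0 : 0 < A) (hA1 : A < 1) (P Q : ℕ) (hP : 0 < P) (hQ : 0 < Q)
    (z : ℝ) (hz0 : 0 < z) (hzA : z < A)
    (c U : ℝ) (hc : c = (P : ℝ) / (Q : ℝ)) (hU : U = A ^ (-c) / z) :
    (1 - A ^ (c + 1) * U) / (1 - A ^ (c - 1) * U) = (z - A) / (z - A⁻¹) ∧
    0 < (z - A) / (z - A⁻¹) ∧
    z * ((1 - A * z) / (1 - A⁻¹ * z)) ^ c
      = A ^ c *
        ((U * ((1 - A ^ (c + 1) * U) / (1 - A ^ (c - 1) * U)) ^ c) ^ (-(Q : ℝ)))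
          ^ ((Q : ℝ)⁻¹) :=
  stmt_2_general A hA0 hA1 Q hQ z hz0 hzA c U hU
end

section
/- Fix a real number A with 0 < A < 1, positive integers P, Q, set c := P/Q, and let γ, δ be integers with Q·δ − P·γ = 1. Let z be real with 0 < z < A, set U := A^{−c}/z, and define (using Real.log, which satisfies Real.log x = Real.log |x| for x ≠ 0): y^BEM(U) := γ·Real.log U + δ·Real.log(1 − A^{c+1}U) − δ·Real.log(1 − A^{c−1}U); Λ(U) := U·((1 − A^{c+1}U)/(1 − A^{c−1}U))^c (real power of the positive ratio); X^BEM(U) := Λ(U)^{−Q}; and y^ACEH(z) := Real.log((1−A⁻¹z)/(1−Az)). Then y^ACEH(z) = Q·y^BEM(U) + γ·Real.log(X^BEM(U)) − Real.log(A²). -/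
open Real

/-
Both logarithms in `y^BEM` combine into `log R` with `R = (1 - A^{c+1}U)/(1 - A^{c-1}U)`, and
`log X^BEM = -Q log U - P log R`; since `Qδ - Pγ = 1`, the terms in `log U` cancel and
`Q·y^BEM + γ·log X^BEM = log R`. Substituting `U = A^{-c}/z` gives `R = A²·(1 - A⁻¹z)/(1 - Az)`.
-/

lemma mul_add_mul_log_rpow_neg_eq_log {p q g d u r : ℝ} (hq : q ≠ 0) (hpq : q * d - p * g = 1)
    (hu : 0 < u) (hr : 0 < r) :
    q * (g * log u + d * log r) + g * log ((u * r ^ (p / q)) ^ (-q)) = log r := by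
  have hlog : log ((u * r ^ (p / q)) ^ (-q)) = -q * (log u + p / q * log r) := by
    rw [log_rpow (by positivity), log_mul hu.ne' (by positivity), log_rpow hr]
  rw [hlog]
  field_simp
  linear_combination log r * hpq

lemma bem_ratio_eq_sq_mul_aceh_ratio {A z : ℝ} (c : ℝ) (hA : 0 < A) (hz : z ≠ 0) :
    (1 - A ^ (c + 1) * (A ^ (-c) / z)) / (1 - A ^ (c - 1) * (A ^ (-c) / z))
      = A ^ 2 * ((1 - A⁻¹ * z) / (1 - A * z)) := by
  have hplus : A ^ (c + 1) * (A ^ (-c) / z) = A / z := by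
    rw [← mul_div_assoc, ← rpow_add hA, add_neg_cancel_comm, rpow_one]
  have hminus : A ^ (c - 1) * (A ^ (-c) / z) = (A * z)⁻¹ := by
    rw [← mul_div_assoc, ← rpow_add hA, show c - 1 + -c = -1 by ring, rpow_neg_one, mul_inv,
      div_eq_mul_inv]
  rw [hplus, hminus]
  rcases eq_or_ne (A * z) 1 with h | h
  · simp [h]
  · field_simp
    ring

theorem stmt_3_general (A : ℝ) (hA0 : 0 < A) (hA1 : A < 1) (P Q : ℕ) (hQ : 0 < Q)
    (γ δ : ℤ) (hSL : (Q : ℤ) * δ - (P : ℤ) * γ = 1)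
    (z : ℝ) (hz0 : 0 < z) (hzA : z < A)
    (c U : ℝ) (hc : c = (P : ℝ) / (Q : ℝ)) (hU : U = A ^ (-c) / z)
    (yBEM ΛU XBEM yACEH : ℝ)
    (hyBEM : yBEM = (γ : ℝ) * Real.log U + (δ : ℝ) * Real.log (1 - A ^ (c + 1) * U)
        - (δ : ℝ) * Real.log (1 - A ^ (c - 1) * U))
    (hΛ : ΛU = U * ((1 - A ^ (c + 1) * U) / (1 - A ^ (c - 1) * U)) ^ c)
    (hXBEM : XBEM = ΛU ^ (-(Q : ℝ)))
    (hyACEH : yACEH = Real.log ((1 - A⁻¹ * z) / (1 - A * z))) :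
    yACEH = (Q : ℝ) * yBEM + (γ : ℝ) * Real.log XBEM - Real.log (A ^ 2) := by
  set R := (1 - A ^ (c + 1) * U) / (1 - A ^ (c - 1) * U) with hR
  have hR_eq : R = A ^ 2 * ((1 - A⁻¹ * z) / (1 - A * z)) := by
    rw [hR, hU, bem_ratio_eq_sq_mul_aceh_ratio c hA0 hz0.ne']
  have haceh_pos : 0 < (1 - A⁻¹ * z) / (1 - A * z) := by
    have : A * z < 1 := by nlinarith
    have : A⁻¹ * z < 1 := by rwa [inv_mul_lt_iff₀ hA0, mul_one]
    apply div_pos <;> linarith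
  have hR_pos : 0 < R := by rw [hR_eq]; positivity
  obtain ⟨hnum, hden⟩ := div_ne_zero_iff.mp hR_pos.ne'
  have hyBEM' : yBEM = γ * log U + δ * log R := by
    rw [hyBEM, hR, log_div hnum hden]
    ring
  have hSL' : (Q : ℝ) * δ - (P : ℝ) * γ = 1 := by exact_mod_cast hSL
  have hcombine : (Q : ℝ) * yBEM + γ * log XBEM = log R := by
    rw [hyBEM', hXBEM, hΛ, hc]
    exact mul_add_mul_log_rpow_neg_eq_log (by positivity) hSL' (by rw [hU]; positivity) hR_pos
  rw [hcombine, hyACEH, ← log_div hR_pos.ne' (by positivity), hR_eq,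
    mul_div_cancel_left₀ _ (by positivity)]

/-- Comparison of the Brini–Eynard–Mariño and ACEH spectral curve functions (second identity):
with `c = P/Q`, `Qδ - Pγ = 1`, `U = A^{-c}/z` for `0 < z < A < 1`,
`y^ACEH(z) = Q·y^BEM(U) + γ·log X^BEM(U) - log A²`, where
`y^BEM(U) = γ log U + δ log(1 - A^{c+1}U) - δ log(1 - A^{c-1}U)`,
`Λ(U) = U·((1-A^{c+1}U)/(1-A^{c-1}U))^c`, `X^BEM(U) = Λ(U)^{-Q}`, and
`y^ACEH(z) = log((1-A⁻¹z)/(1-Az))`. -/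
theorem stmt_3 (A : ℝ) (hA0 : 0 < A) (hA1 : A < 1) (P Q : ℕ) (hP : 0 < P) (hQ : 0 < Q)
    (γ δ : ℤ) (hSL : (Q : ℤ) * δ - (P : ℤ) * γ = 1)
    (z : ℝ) (hz0 : 0 < z) (hzA : z < A)
    (c U : ℝ) (hc : c = (P : ℝ) / (Q : ℝ)) (hU : U = A ^ (-c) / z)
    (yBEM ΛU XBEM yACEH : ℝ)
    (hyBEM : yBEM = (γ : ℝ) * Real.log U + (δ : ℝ) * Real.log (1 - A ^ (c + 1) * U)
        - (δ : ℝ) * Real.log (1 - A ^ (c - 1) * U))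
    (hΛ : ΛU = U * ((1 - A ^ (c + 1) * U) / (1 - A ^ (c - 1) * U)) ^ c)
    (hXBEM : XBEM = ΛU ^ (-(Q : ℝ)))
    (hyACEH : yACEH = Real.log ((1 - A⁻¹ * z) / (1 - A * z))) :
    yACEH = (Q : ℝ) * yBEM + (γ : ℝ) * Real.log XBEM - Real.log (A ^ 2) :=
  stmt_3_general A hA0 hA1 P Q hQ γ δ hSL z hz0 hzA c U hc hU yBEM ΛU XBEM yACEH hyBEM hΛ hXBEM
    hyACEH
end

section
/- Fix a real number A with 0 < A < 1, positive integers P, Q, set c := P/Q, and let γ, δ be integers with Q·δ − P·γ = 1. For 0 < t < A set U(t) := A^{−c}/t, Λ(U) := U·((1 − A^{c+1}U)/(1 − A^{c−1}U))^c (real power of the positive ratio), X^BEM(U) := Λ(U)^{−Q}, X^ACEH(t) := t·((1−At)/(1−A⁻¹t))^c, y^BEM(U) := γ·Real.log U + δ·Real.log(1 − A^{c+1}U) − δ·Real.log(1 − A^{c−1}U), and y^ACEH(t) := Real.log((1−A⁻¹t)/(1−At)). Then for every z with 0 < z < A: y^ACEH(z) · deriv (fun t ↦ Real.log (X^ACEH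 t)) z = (1/Q) · (Q·y^BEM(U(z)) + γ·Real.log(X^BEM(U(z))) − Real.log(A²)) · deriv (fun t ↦ Real.log (X^BEM (U t))) z. -/
open Real

/-!
In the coordinate `t` with `U = A^{-c}/t`, both factors `1 - A^{c±1}U` become
`-(A^{±1}/t)(1 - A^{∓1}t)`, so every logarithm on the BEM side is an explicit combination of
`log A`, `log t`, `log (1 - A t)` and `log (1 - A⁻¹ t)`. This gives
`log X^BEM(U t) = Q log X^ACEH(t) - Qc log A` on `(0, A)`, whence the two `z`-derivatives differ by
the factor `Q`, and `Qδ - Pγ = 1` collapses the BEM prefactor to `y^ACEH`.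
-/

noncomputable def bemU (A c t : ℝ) : ℝ := A ^ (-c) / t

noncomputable def bemLambda (A c u : ℝ) : ℝ :=
  u * ((1 - A ^ (c + 1) * u) / (1 - A ^ (c - 1) * u)) ^ c

noncomputable def bemX (A c Q u : ℝ) : ℝ := bemLambda A c u ^ (-Q)

noncomputable def bemY (A c γ δ u : ℝ) : ℝ :=
  γ * log u + δ * log (1 - A ^ (c + 1) * u) - δ * log (1 - A ^ (c - 1) * u)

noncomputable def acehX (A c t : ℝ) : ℝ := t * ((1 - A * t) / (1 - A⁻¹ * t)) ^ c

noncomputable def acehY (A t : ℝ) : ℝ := log ((1 - A⁻¹ * t) / (1 - A * t))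

theorem Real.log_one_sub_div {a t : ℝ} (ha : a ≠ 0) (ht : t ≠ 0) (h : 1 - a⁻¹ * t ≠ 0) :
    log (1 - a / t) = log a - log t + log (1 - a⁻¹ * t) := by
  have hfactor : 1 - a / t = -(a / t * (1 - a⁻¹ * t)) := by field_simp; ring
  rw [hfactor, log_neg_eq_log, log_mul (div_ne_zero ha ht) h, log_div ha ht]

section SpectralCurves

variable {A c t : ℝ}

theorem one_sub_mul_pos (hA0 : 0 < A) (hA1 : A < 1) (htA : t < A) :
    0 < 1 - A * t := by
  nlinarith

theorem one_sub_inv_mul_pos (hA0 : 0 < A) (htA : t < A) : 0 < 1 - A⁻¹ * t := by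
  have : A⁻¹ * t < 1 := by rw [inv_mul_lt_iff₀ hA0, mul_one]; exact htA
  linarith

theorem rpow_add_one_mul_bemU (hA0 : 0 < A) : A ^ (c + 1) * bemU A c t = A / t := by
  rw [bemU, mul_div_assoc', ← rpow_add hA0, add_neg_cancel_comm, rpow_one]

theorem rpow_sub_one_mul_bemU (hA0 : 0 < A) : A ^ (c - 1) * bemU A c t = A⁻¹ / t := by
  rw [bemU, mul_div_assoc', ← rpow_add hA0, show c - 1 + -c = -1 by ring, rpow_neg_one]

theorem one_sub_rpow_add_one_mul_bemU_neg (hA0 : 0 < A) (ht0 : 0 < t) (htA : t < A) :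
    1 - A ^ (c + 1) * bemU A c t < 0 := by
  rw [rpow_add_one_mul_bemU hA0, sub_neg, one_lt_div ht0]
  exact htA

theorem one_sub_rpow_sub_one_mul_bemU_neg (hA0 : 0 < A) (hA1 : A < 1) (ht0 : 0 < t)
    (htA : t < A) : 1 - A ^ (c - 1) * bemU A c t < 0 := by
  rw [rpow_sub_one_mul_bemU hA0, sub_neg, one_lt_div ht0]
  exact htA.trans (hA1.trans ((one_lt_inv₀ hA0).mpr hA1))

theorem log_bemU (hA0 : 0 < A) (ht0 : 0 < t) : log (bemU A c t) = -c * log A - log t := by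
  rw [bemU, log_div (rpow_pos_of_pos hA0 _).ne' ht0.ne', log_rpow hA0]

theorem log_one_sub_rpow_add_one_mul_bemU (hA0 : 0 < A) (ht0 : 0 < t) (htA : t < A) :
    log (1 - A ^ (c + 1) * bemU A c t) = log A - log t + log (1 - A⁻¹ * t) := by
  rw [rpow_add_one_mul_bemU hA0,
    log_one_sub_div hA0.ne' ht0.ne' (one_sub_inv_mul_pos hA0 htA).ne']

theorem log_one_sub_rpow_sub_one_mul_bemU (hA0 : 0 < A) (hA1 : A < 1) (ht0 : 0 < t)
    (htA : t < A) :
    log (1 - A ^ (c - 1) * bemU A c t) = -log A - log t + log (1 - A * t) := by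
  have h := one_sub_mul_pos hA0 hA1 htA
  rw [rpow_sub_one_mul_bemU hA0,
    log_one_sub_div (inv_ne_zero hA0.ne') ht0.ne' (by rw [inv_inv]; exact h.ne'), log_inv, inv_inv]

theorem log_bemLambda_bemU (hA0 : 0 < A) (hA1 : A < 1) (ht0 : 0 < t) (htA : t < A) :
    log (bemLambda A c (bemU A c t))
      = c * log A - log t + c * (log (1 - A⁻¹ * t) - log (1 - A * t)) := by
  have hnum := one_sub_rpow_add_one_mul_bemU_neg (c := c) hA0 ht0 htA
  have hden := one_sub_rpow_sub_one_mul_bemU_neg (c := c) hA0 hA1 ht0 htA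
  have hratio := div_pos_of_neg_of_neg hnum hden
  have hU : 0 < bemU A c t := div_pos (rpow_pos_of_pos hA0 _) ht0
  rw [bemLambda, log_mul hU.ne' (rpow_pos_of_pos hratio _).ne', log_rpow hratio,
    log_div hnum.ne hden.ne, log_bemU hA0 ht0, log_one_sub_rpow_add_one_mul_bemU hA0 ht0 htA,
    log_one_sub_rpow_sub_one_mul_bemU hA0 hA1 ht0 htA]
  ring

theorem log_acehX (hA0 : 0 < A) (hA1 : A < 1) (ht0 : 0 < t) (htA : t < A) :
    log (acehX A c t) = log t + c * (log (1 - A * t) - log (1 - A⁻¹ * t)) := by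
  have h1 := one_sub_mul_pos hA0 hA1 htA
  have h2 := one_sub_inv_mul_pos hA0 htA
  rw [acehX, log_mul ht0.ne' (rpow_pos_of_pos (div_pos h1 h2) _).ne', log_rpow (div_pos h1 h2),
    log_div h1.ne' h2.ne']

theorem acehY_eq (hA0 : 0 < A) (hA1 : A < 1) (htA : t < A) :
    acehY A t = log (1 - A⁻¹ * t) - log (1 - A * t) :=
  log_div (one_sub_inv_mul_pos hA0 htA).ne' (one_sub_mul_pos hA0 hA1 htA).ne'

theorem log_bemX_bemU (Q : ℝ) (hA0 : 0 < A) (hA1 : A < 1) (ht0 : 0 < t) (htA : t < A) :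
    log (bemX A c Q (bemU A c t)) = Q * log (acehX A c t) - Q * c * log A := by
  have hΛ : 0 < bemLambda A c (bemU A c t) :=
    mul_pos (div_pos (rpow_pos_of_pos hA0 _) ht0)
      (rpow_pos_of_pos (div_pos_of_neg_of_neg (one_sub_rpow_add_one_mul_bemU_neg hA0 ht0 htA)
        (one_sub_rpow_sub_one_mul_bemU_neg hA0 hA1 ht0 htA)) _)
  rw [bemX, log_rpow hΛ, log_bemLambda_bemU hA0 hA1 ht0 htA, log_acehX hA0 hA1 ht0 htA]
  ring

theorem deriv_log_bemX_bemU (Q : ℝ) (hA0 : 0 < A) (hA1 : A < 1) {z : ℝ} (hz0 : 0 < z)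
    (hzA : z < A) :
    deriv (fun t => log (bemX A c Q (bemU A c t))) z
      = Q * deriv (fun t => log (acehX A c t)) z := by
  have hloc : (fun t => log (bemX A c Q (bemU A c t)))
      =ᶠ[nhds z] fun t => Q * log (acehX A c t) - Q * c * log A := by
    filter_upwards [Ioo_mem_nhds hz0 hzA] with t ht
    exact log_bemX_bemU Q hA0 hA1 ht.1 ht.2
  rw [hloc.deriv_eq, deriv_sub_const, deriv_const_mul_field]

theorem bemY_prefactor_eq_acehY {Q P γ δ : ℝ} (hQc : Q * c = P) (hSL : Q * δ - P * γ = 1)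
    (hA0 : 0 < A) (hA1 : A < 1) (ht0 : 0 < t) (htA : t < A) :
    Q * bemY A c γ δ (bemU A c t) + γ * log (bemX A c Q (bemU A c t)) - log (A ^ 2)
      = acehY A t := by
  rw [bemY, log_bemU hA0 ht0, log_one_sub_rpow_add_one_mul_bemU hA0 ht0 htA,
    log_one_sub_rpow_sub_one_mul_bemU hA0 hA1 ht0 htA, log_bemX_bemU Q hA0 hA1 ht0 htA,
    log_acehX hA0 hA1 ht0 htA, log_pow, acehY_eq hA0 hA1 htA]
  linear_combination (γ * (log (1 - A * t) - log (1 - A⁻¹ * t)) - 2 * γ * log A) * hQc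
    + (2 * log A + log (1 - A⁻¹ * t) - log (1 - A * t)) * hSL

end SpectralCurves

theorem stmt_5_general (A : ℝ) (hA0 : 0 < A) (hA1 : A < 1) (P Q : ℕ) (hQ : 0 < Q)
    (γ δ : ℤ) (hSL : (Q : ℤ) * δ - (P : ℤ) * γ = 1)
    (c : ℝ) (hc : c = (P : ℝ) / (Q : ℝ))
    (U Λ XBEM XACEH yBEM yACEH : ℝ → ℝ)
    (hU : ∀ t, U t = A ^ (-c) / t)
    (hΛ : ∀ u, Λ u = u * ((1 - A ^ (c + 1) * u) / (1 - A ^ (c - 1) * u)) ^ c)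
    (hXBEM : ∀ u, XBEM u = (Λ u) ^ (-(Q : ℝ)))
    (hXACEH : ∀ t, XACEH t = t * ((1 - A * t) / (1 - A⁻¹ * t)) ^ c)
    (hyBEM : ∀ u, yBEM u = (γ : ℝ) * Real.log u + (δ : ℝ) * Real.log (1 - A ^ (c + 1) * u)
        - (δ : ℝ) * Real.log (1 - A ^ (c - 1) * u))
    (hyACEH : ∀ t, yACEH t = Real.log ((1 - A⁻¹ * t) / (1 - A * t))) :
    ∀ z : ℝ, 0 < z → z < A →
      yACEH z * deriv (fun t => Real.log (XACEH t)) z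
        = (1 / (Q : ℝ)) *
            ((Q : ℝ) * yBEM (U z) + (γ : ℝ) * Real.log (XBEM (U z)) - Real.log (A ^ 2)) *
            deriv (fun t => Real.log (XBEM (U t))) z := by
  intro z hz0 hzA
  obtain rfl : U = bemU A c := funext hU
  obtain rfl : Λ = bemLambda A c := funext hΛ
  obtain rfl : XBEM = bemX A c Q := funext hXBEM
  obtain rfl : XACEH = acehX A c := funext hXACEH
  obtain rfl : yBEM = bemY A c γ δ := funext hyBEM
  obtain rfl : yACEH = acehY A := funext hyACEH
  have hQ0 : (Q : ℝ) ≠ 0 := Nat.cast_ne_zero.mpr hQ.ne'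
  have hQc : (Q : ℝ) * c = P := by rw [hc, mul_div_cancel₀ _ hQ0]
  rw [bemY_prefactor_eq_acehY hQc (by exact_mod_cast hSL) hA0 hA1 hz0 hzA,
    deriv_log_bemX_bemU _ hA0 hA1 hz0 hzA]
  field_simp

/-- `ω_{0,1}` in the two presentations: as an identity of derivatives in the coordinate `z`,
`y^ACEH(z) · d/dz[log X^ACEH] = (1/Q)(Q·y^BEM(U(z)) + γ·log X^BEM(U(z)) - log A²) · d/dz[log X^BEM(U(·))]`,
where `U(t) = A^{-c}/t`, `Λ(U) = U·((1-A^{c+1}U)/(1-A^{c-1}U))^c`, `X^BEM = Λ^{-Q}`,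
`X^ACEH(t) = t·((1-At)/(1-A⁻¹t))^c`, `y^BEM(U) = γ log U + δ log(1-A^{c+1}U) - δ log(1-A^{c-1}U)`,
`y^ACEH(t) = log((1-A⁻¹t)/(1-At))`, `c = P/Q`, and `Qδ - Pγ = 1`. -/
theorem stmt_5 (A : ℝ) (hA0 : 0 < A) (hA1 : A < 1) (P Q : ℕ) (hP : 0 < P) (hQ : 0 < Q)
    (γ δ : ℤ) (hSL : (Q : ℤ) * δ - (P : ℤ) * γ = 1)
    (c : ℝ) (hc : c = (P : ℝ) / (Q : ℝ))
    (U Λ XBEM XACEH yBEM yACEH : ℝ → ℝ)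
    (hU : ∀ t, U t = A ^ (-c) / t)
    (hΛ : ∀ u, Λ u = u * ((1 - A ^ (c + 1) * u) / (1 - A ^ (c - 1) * u)) ^ c)
    (hXBEM : ∀ u, XBEM u = (Λ u) ^ (-(Q : ℝ)))
    (hXACEH : ∀ t, XACEH t = t * ((1 - A * t) / (1 - A⁻¹ * t)) ^ c)
    (hyBEM : ∀ u, yBEM u = (γ : ℝ) * Real.log u + (δ : ℝ) * Real.log (1 - A ^ (c + 1) * u)
        - (δ : ℝ) * Real.log (1 - A ^ (c - 1) * u))
    (hyACEH : ∀ t, yACEH t = Real.log ((1 - A⁻¹ * t) / (1 - A * t))) :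
    ∀ z : ℝ, 0 < z → z < A →
      yACEH z * deriv (fun t => Real.log (XACEH t)) z
        = (1 / (Q : ℝ)) *
            ((Q : ℝ) * yBEM (U z) + (γ : ℝ) * Real.log (XBEM (U z)) - Real.log (A ^ 2)) *
            deriv (fun t => Real.log (XBEM (U t))) z :=
  stmt_5_general A hA0 hA1 P Q hQ γ δ hSL c hc U Λ XBEM XACEH yBEM yACEH hU hΛ hXBEM hXACEH hyBEM
    hyACEH
end

section
/- Let n ≥ 1 be an integer, α a type, R a commutative ring, f : (Fin n → α) → R a function, σ : α → α any map, and z ∈ α. Then 2^{n−1} · ( f(fun _ ↦ z) + f(fun _ ↦ σ z) ) = ∑_{J ⊆ Fin n, |J| even} ∑_{T ⊆ Fin n} (−1)^{|T ∩ J|} · f(fun i ↦ if i ∈ T then σ z else z), where the outer sum runs over all subsets J of Fin n of even cardinality and the inner sum over all subsets T of Fin n. -/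
open Finset

lemma auxA (n : ℕ) (T : Finset (Fin n)) :
    ∑ J : Finset (Fin n), (-1:ℤ)^(T∩J).card = if T = ∅ then 2^n else 0 := by
  have h1 : ∀ J : Finset (Fin n), (-1:ℤ)^(T∩J).card
      = (∏ i ∈ J, (if i ∈ T then (-1:ℤ) else 1)) * ∏ i ∈ (univ : Finset (Fin n)) \ J, 1 := by
    intro J
    rw [prod_const_one, mul_one, ← Finset.prod_filter_mul_prod_filter_not J (· ∈ T)]
    rw [Finset.prod_congr rfl (fun i hi => if_pos (Finset.mem_filter.mp hi).2),
        Finset.prod_congr rfl (fun i hi => if_neg (Finset.mem_filter.mp hi).2)]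
    rw [prod_const, prod_const_one, mul_one, Finset.filter_mem_eq_inter, Finset.inter_comm]
  calc ∑ J : Finset (Fin n), (-1:ℤ)^(T∩J).card
      = ∑ J ∈ (univ : Finset (Fin n)).powerset,
          (∏ i ∈ J, (if i ∈ T then (-1:ℤ) else 1)) * ∏ i ∈ (univ : Finset (Fin n)) \ J, 1 := by
        rw [Finset.powerset_univ]; exact Finset.sum_congr rfl (fun J _ => h1 J)
    _ = ∏ i : Fin n, ((if i ∈ T then (-1:ℤ) else 1) + 1) := (Finset.prod_add _ _ _).symm
    _ = if T = ∅ then 2^n else 0 := by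
        by_cases hT : T = ∅
        · subst hT; simp [prod_const]
        · rw [if_neg hT]
          obtain ⟨i, hi⟩ := Finset.nonempty_iff_ne_empty.mpr hT
          exact Finset.prod_eq_zero (Finset.mem_univ i) (by simp [hi])

lemma auxB (n : ℕ) (T : Finset (Fin n)) :
    ∑ J : Finset (Fin n), (-1:ℤ)^(T∩J).card * (-1)^J.card = if T = univ then 2^n else 0 := by
  have h1 : ∀ J : Finset (Fin n), (-1:ℤ)^(T∩J).card * (-1)^J.card
      = (∏ i ∈ J, (if i ∈ T then (1:ℤ) else -1)) * ∏ i ∈ (univ : Finset (Fin n)) \ J, 1 := by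
    intro J
    rw [prod_const_one, mul_one, ← Finset.prod_filter_mul_prod_filter_not J (· ∈ T)]
    rw [Finset.prod_congr rfl (fun i hi => if_pos (Finset.mem_filter.mp hi).2),
        Finset.prod_congr rfl (fun i hi => if_neg (Finset.mem_filter.mp hi).2)]
    rw [prod_const, one_pow, one_mul, prod_const]
    have hcard : (J ∩ T).card + (J \ T).card = J.card := Finset.card_inter_add_card_sdiff J T
    have hfilt : (J.filter (fun i => ¬ i ∈ T)).card = (J \ T).card := by
      congr 1; ext i; simp [Finset.mem_sdiff, Finset.mem_filter]
    rw [hfilt, Finset.inter_comm T J, ← hcard, pow_add, ← mul_assoc, ← mul_pow]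
    norm_num
  calc ∑ J : Finset (Fin n), (-1:ℤ)^(T∩J).card * (-1)^J.card
      = ∑ J ∈ (univ : Finset (Fin n)).powerset,
          (∏ i ∈ J, (if i ∈ T then (1:ℤ) else -1)) * ∏ i ∈ (univ : Finset (Fin n)) \ J, 1 := by
        rw [Finset.powerset_univ]; exact Finset.sum_congr rfl (fun J _ => h1 J)
    _ = ∏ i : Fin n, ((if i ∈ T then (1:ℤ) else -1) + 1) := (Finset.prod_add _ _ _).symm
    _ = if T = univ then 2^n else 0 := by
        by_cases hT : T = univ
        · subst hT; simp [prod_const]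
        · rw [if_neg hT]
          have : ∃ i, i ∉ T := by
            by_contra h
            push_neg at h
            exact hT (Finset.eq_univ_of_forall h)
          obtain ⟨i, hi⟩ := this
          exact Finset.prod_eq_zero (Finset.mem_univ i) (by simp [hi])

lemma coeff (n : ℕ) (hn : 1 ≤ n) (T : Finset (Fin n)) :
    ∑ J ∈ Finset.univ.filter (fun J : Finset (Fin n) => Even J.card), (-1:ℤ)^(T∩J).card
    = (if T = ∅ then 2^(n-1) else 0) + (if T = univ then 2^(n-1) else 0) := by
  have h2 : (2:ℤ) * ∑ J ∈ Finset.univ.filter (fun J : Finset (Fin n) => Even J.card),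
      (-1:ℤ)^(T∩J).card
      = ∑ J : Finset (Fin n), (-1:ℤ)^(T∩J).card * (1 + (-1)^J.card) := by
    rw [← Finset.sum_filter_add_sum_filter_not (univ : Finset (Finset (Fin n)))
        (fun J => Even J.card)]
    have e1 : ∑ J ∈ Finset.univ.filter (fun J : Finset (Fin n) => Even J.card),
        (-1:ℤ)^(T∩J).card * (1 + (-1)^J.card)
        = ∑ J ∈ Finset.univ.filter (fun J : Finset (Fin n) => Even J.card),
        2 * (-1:ℤ)^(T∩J).card := by
      refine Finset.sum_congr rfl (fun J hJ => ?_)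
      have : Even J.card := (Finset.mem_filter.mp hJ).2
      rw [this.neg_one_pow]; ring
    have e2 : ∑ J ∈ Finset.univ.filter (fun J : Finset (Fin n) => ¬ Even J.card),
        (-1:ℤ)^(T∩J).card * (1 + (-1)^J.card) = 0 := by
      refine Finset.sum_eq_zero (fun J hJ => ?_)
      have : Odd J.card := Nat.not_even_iff_odd.mp (Finset.mem_filter.mp hJ).2
      rw [this.neg_one_pow]; ring
    rw [e1, e2, add_zero, Finset.mul_sum]
  have h3 : ∑ J : Finset (Fin n), (-1:ℤ)^(T∩J).card * (1 + (-1)^J.card)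
      = (if T = ∅ then 2^n else 0) + (if T = univ then 2^n else 0) := by
    rw [← auxA n T, ← auxB n T, ← Finset.sum_add_distrib]
    exact Finset.sum_congr rfl (fun J _ => by ring)
  have hpow : (2:ℤ)^n = 2 * 2^(n-1) := by
    conv_lhs => rw [show n = (n-1) + 1 from (Nat.succ_pred_eq_of_pos hn).symm]
    rw [pow_succ]; ring
  apply mul_left_cancel₀ (two_ne_zero (α := ℤ))
  rw [h2, h3, hpow]
  split_ifs <;> ring

/-- Expanded form of the symmetrization identity
`S_z[f(z,…,z)] = 2^{1-n} ∑_{I⊔J=⟦n⟧, |J| even} (∏_{i∈I} S_{z_i})(∏_{j∈J} Δ_{z_j}) f |_{z_i=z}`: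
for any `f : (Fin n → α) → R`, any map `σ : α → α` and any `z : α`,
`2^{n-1}(f(z,…,z) + f(σz,…,σz)) = ∑_{J even} ∑_{T} (-1)^{|T∩J|} f(...)`,
where the argument of `f` has `σ z` in the slots of `T` and `z` elsewhere. -/
theorem stmt_6 (n : ℕ) (hn : 1 ≤ n) (α : Type*) (R : Type*) [CommRing R]
    (f : (Fin n → α) → R) (σ : α → α) (z : α) :
    (2 : R) ^ (n - 1) * (f (fun _ => z) + f (fun _ => σ z))
      = ∑ J ∈ Finset.univ.filter (fun J : Finset (Fin n) => Even J.card),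
          ∑ T : Finset (Fin n),
            (-1 : R) ^ (T ∩ J).card * f (fun i => if i ∈ T then σ z else z) := by
  rw [Finset.sum_comm]
  have key : ∀ T : Finset (Fin n),
      ∑ J ∈ Finset.univ.filter (fun J : Finset (Fin n) => Even J.card),
        (-1 : R) ^ (T ∩ J).card * f (fun i => if i ∈ T then σ z else z)
      = ((if T = ∅ then (2:R)^(n-1) else 0) + (if T = univ then (2:R)^(n-1) else 0))
          * f (fun i => if i ∈ T then σ z else z) := by
    intro T
    rw [← Finset.sum_mul]
    congr 1
    have := coeff n hn T
    have hc : ((∑ J ∈ Finset.univ.filter (fun J : Finset (Fin n) => Even J.card),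
        (-1:ℤ)^(T∩J).card : ℤ) : R)
        = ∑ J ∈ Finset.univ.filter (fun J : Finset (Fin n) => Even J.card),
        (-1:R)^(T∩J).card := by push_cast; rfl
    rw [← hc, this]
    push_cast
    rfl
  rw [Finset.sum_congr rfl (fun T _ => key T)]
  have h1 : (fun i : Fin n => if i ∈ (∅ : Finset (Fin n)) then σ z else z) = fun _ => z := by
    funext i; simp
  have h2 : (fun i : Fin n => if i ∈ (univ : Finset (Fin n)) then σ z else z)
      = fun _ => σ z := by
    funext i; simp
  simp only [add_mul, ite_mul, zero_mul, Finset.sum_add_distrib, Finset.sum_ite_eq',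
    Finset.mem_univ, if_true, h1, h2]
  ring
end
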